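/- Under the MMQ algorithm, if user m strictly prefers the base station π(m') assigned to another user m' over its own assignment π(m), then m' precedes m in the master list, i.e., m' ≻_ML m. -/

import Mathlib

/-- Load of base station `n` under a partial assignment `π`. -/
def bsLoad {M N : Type*} [Fintype M] [DecidableEq N] (π : M → Option N) (n : N) : ℕ :=
  (Finset.univ.filter (fun m => π m = some n)).card

/-- The MMQ (matching with minimum quotas) serial-dictatorship run: users are processed
in master-list order; while the number of remaining users exceeds the total unmet minimum
quota (phase 1), each user goes to its most preferred (lowest `rank`) base station whose
load is below its maximum quota; once the remaining users exactly fill the unmet minimum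
quotas (phase 2), each user goes to its most preferred base station whose load is below
its minimum quota. -/
noncomputable def mmqRun {M N : Type*} [Fintype M] [Fintype N] [DecidableEq M] [DecidableEq N]
    (qmin qmax : N → ℕ) (rank : M → N → ℕ) :
    List M → (M → Option N) → (M → Option N)
  | [], π => π
  | m :: rest, π =>
      let κ := bsLoad π
      let deficit := ∑ n : N, (qmin n - κ n)
      let allowed : Finset N :=
        if rest.length + 1 = deficit then Finset.univ.filter (fun n => κ n < qmin n)
        else Finset.univ.filter (fun n => κ n < qmax n)
      match allowed.toList.argmin (rank m) with
      | some n => mmqRun qmin qmax rank rest (Function.update π m (some n))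
      | none => mmqRun qmin qmax rank rest π

/-!
A user `m` processed before `m'` would have taken `π(m')` had it been offered, so that station
was closed to `m`: it was at its maximum quota, or the run was already in its second phase and
the station at its minimum quota. Both conditions persist: loads only grow, and in the second
phase every user fills one unit of the unmet minimum quotas, so the run never leaves it. Hence
the station is never offered to `m'` either.
-/

section
variable {M N : Type*} [Fintype M] [DecidableEq N]

theorem bsLoad_update_of_eq_none [DecidableEq M] {π : M → Option N} {h : M} (hh : π h = none)
    (n₀ : N) :
    bsLoad (Function.update π h (some n₀)) = Function.update (bsLoad π) n₀ (bsLoad π n₀ + 1) := by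
  funext n
  rcases eq_or_ne n n₀ with rfl | hn
  · have : Finset.univ.filter (fun m => Function.update π h (some n) m = some n) =
        insert h (Finset.univ.filter (fun m => π m = some n)) := by
      ext m
      by_cases hm : m = h <;> simp [hm, hh]
    rw [Function.update_self, bsLoad, this, Finset.card_insert_of_notMem (by simp [hh]), bsLoad]
  · rw [Function.update_of_ne hn, bsLoad, bsLoad]
    congr 1
    ext m
    by_cases hm : m = h <;> simp [hm, hh, Ne.symm hn]

variable [Fintype N] {qmin qmax : N → ℕ} {π : M → Option N} {k : ℕ}

def mmqDeficit (qmin : N → ℕ) (π : M → Option N) : ℕ :=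
  ∑ n : N, (qmin n - bsLoad π n)

theorem exists_bsLoad_lt_of_mmqDeficit_pos (hpos : 0 < mmqDeficit qmin π) :
    ∃ n, bsLoad π n < qmin n := by
  obtain ⟨n, -, hn⟩ := Finset.exists_ne_zero_of_sum_ne_zero hpos.ne'
  exact ⟨n, by omega⟩

/-- The stations offered to the next user when `k` users, this one included, remain. -/
def mmqAllowed (qmin qmax : N → ℕ) (π : M → Option N) (k : ℕ) : Finset N :=
  if k = mmqDeficit qmin π then Finset.univ.filter (fun n => bsLoad π n < qmin n)
  else Finset.univ.filter (fun n => bsLoad π n < qmax n)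

theorem notMem_mmqAllowed_iff (hq : ∀ n, qmin n ≤ qmax n) {b : N} :
    b ∉ mmqAllowed qmin qmax π k ↔
      qmax b ≤ bsLoad π b ∨ (k = mmqDeficit qmin π ∧ qmin b ≤ bsLoad π b) := by
  unfold mmqAllowed
  split_ifs with hk
  · simp only [hk, Finset.mem_filter, Finset.mem_univ, true_and, not_lt]
    exact ⟨Or.inr, fun hb => hb.elim (hq b).trans id⟩
  · simp [hk]

variable [DecidableEq M] {rank : M → N → ℕ} {h : M}

noncomputable def mmqStep (qmin qmax : N → ℕ) (rank : M → N → ℕ) (k : ℕ) (π : M → Option N)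
    (h : M) : M → Option N :=
  match (mmqAllowed qmin qmax π k).toList.argmin (rank h) with
  | some n => Function.update π h (some n)
  | none => π

theorem mmqRun_cons (rest : List M) :
    mmqRun qmin qmax rank (h :: rest) π =
      mmqRun qmin qmax rank rest (mmqStep qmin qmax rank (rest.length + 1) π h) := by
  change (match (mmqAllowed qmin qmax π (rest.length + 1)).toList.argmin (rank h) with
    | some n => mmqRun qmin qmax rank rest (Function.update π h (some n))
    | none => mmqRun qmin qmax rank rest π) = _
  unfold mmqStep
  split <;> rfl

theorem mmqStep_of_ne {x : M} (hx : x ≠ h) : mmqStep qmin qmax rank k π h x = π x := by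
  rcases he : (mmqAllowed qmin qmax π k).toList.argmin (rank h) with _ | n <;>
    simp [mmqStep, he, hx]

theorem mmqStep_self (hh : π h = none) :
    mmqStep qmin qmax rank k π h h = (mmqAllowed qmin qmax π k).toList.argmin (rank h) := by
  rcases he : (mmqAllowed qmin qmax π k).toList.argmin (rank h) with _ | n <;>
    simp [mmqStep, he, hh]

theorem mmqRun_of_notMem {x : M} : ∀ {l : List M} {π : M → Option N}, x ∉ l →
    mmqRun qmin qmax rank l π x = π x
  | [], _, _ => rfl
  | _ :: _, _, hx => by
    rw [List.mem_cons, not_or] at hx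
    rw [mmqRun_cons, mmqRun_of_notMem hx.2, mmqStep_of_ne hx.1]

theorem mmqStep_eq_none_of_mem {rest : List M} (hnd : (h :: rest).Nodup)
    (hnone : ∀ x ∈ h :: rest, π x = none) :
    ∀ x ∈ rest, mmqStep qmin qmax rank k π h x = none := fun x hx => by
  rw [mmqStep_of_ne (ne_of_mem_of_not_mem hx (List.nodup_cons.mp hnd).1)]
  exact hnone x (List.mem_cons_of_mem h hx)

theorem bsLoad_le_bsLoad_mmqStep (hh : π h = none) (n : N) :
    bsLoad π n ≤ bsLoad (mmqStep qmin qmax rank k π h) n := by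
  rcases he : (mmqAllowed qmin qmax π k).toList.argmin (rank h) with _ | n₀
  · simp [mmqStep, he]
  · rw [mmqStep, he, bsLoad_update_of_eq_none hh]
    rcases eq_or_ne n n₀ with rfl | hn <;> simp [*]

theorem mmqDeficit_update_add_one (hh : π h = none) {n₀ : N} (hn₀ : bsLoad π n₀ < qmin n₀) :
    mmqDeficit qmin (Function.update π h (some n₀)) + 1 = mmqDeficit qmin π := by
  unfold mmqDeficit
  rw [bsLoad_update_of_eq_none hh]
  simp_rw [Function.apply_update (fun n κ => qmin n - κ)]
  rw [Finset.sum_update_of_mem (Finset.mem_univ n₀),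
    Finset.sum_eq_add_sum_sdiff_singleton_of_mem (Finset.mem_univ n₀)]
  omega

theorem mmqDeficit_mmqStep (hh : π h = none) (hk : k + 1 = mmqDeficit qmin π) :
    mmqDeficit qmin (mmqStep qmin qmax rank (k + 1) π h) = k := by
  have hA : mmqAllowed qmin qmax π (k + 1) = Finset.univ.filter (fun n => bsLoad π n < qmin n) :=
    if_pos hk
  have hpos : 0 < mmqDeficit qmin π := by omega
  obtain ⟨n, hn⟩ := exists_bsLoad_lt_of_mmqDeficit_pos hpos
  obtain ⟨n₀, hn₀⟩ : ∃ n₀, (mmqAllowed qmin qmax π (k + 1)).toList.argmin (rank h) = some n₀ := by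
    refine Option.ne_none_iff_exists'.mp fun he => ?_
    rw [List.argmin_eq_none, Finset.toList_eq_nil, hA] at he
    exact Finset.filter_eq_empty_iff.mp he (Finset.mem_univ n) hn
  have hn₀A := Finset.mem_toList.mp (List.argmin_mem hn₀)
  rw [hA, Finset.mem_filter] at hn₀A
  have hdrop := mmqDeficit_update_add_one hh hn₀A.2
  simp only [mmqStep, hn₀]
  omega

theorem notMem_mmqAllowed_mmqStep (hq : ∀ n, qmin n ≤ qmax n) (hh : π h = none) {b : N}
    (hb : b ∉ mmqAllowed qmin qmax π (k + 1)) :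
    b ∉ mmqAllowed qmin qmax (mmqStep qmin qmax rank (k + 1) π h) k := by
  have hmono : bsLoad π b ≤ bsLoad (mmqStep qmin qmax rank (k + 1) π h) b :=
    bsLoad_le_bsLoad_mmqStep hh b
  rw [notMem_mmqAllowed_iff hq] at hb ⊢
  rcases hb with hmax | ⟨hk, hmin⟩
  · exact Or.inl (hmax.trans hmono)
  · exact Or.inr ⟨(mmqDeficit_mmqStep hh hk).symm, hmin.trans hmono⟩

theorem mmqRun_ne_some_of_notMem_mmqAllowed (hq : ∀ n, qmin n ≤ qmax n) {b : N} :
    ∀ {l : List M} {π : M → Option N}, l.Nodup → (∀ x ∈ l, π x = none) →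
      b ∉ mmqAllowed qmin qmax π l.length → ∀ x ∈ l, mmqRun qmin qmax rank l π x ≠ some b
  | [], _, _, _, _, x, hx => absurd hx List.not_mem_nil
  | h :: rest, π, hnd, hnone, hb, x, hx => by
    have hh : π h = none := hnone h List.mem_cons_self
    rw [mmqRun_cons]
    rcases List.mem_cons.mp hx with rfl | hx
    · rw [mmqRun_of_notMem (List.nodup_cons.mp hnd).1, mmqStep_self hh]
      exact fun he => hb (Finset.mem_toList.mp (List.argmin_mem he))
    · exact mmqRun_ne_some_of_notMem_mmqAllowed hq (List.nodup_cons.mp hnd).2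
        (mmqStep_eq_none_of_mem hnd hnone) (notMem_mmqAllowed_mmqStep hq hh hb) x hx

theorem rank_le_of_mmqRun_cons (hq : ∀ n, qmin n ≤ qmax n) {rest : List M} {m' : M} {a b : N}
    (hnd : (h :: rest).Nodup) (hnone : ∀ x ∈ h :: rest, π x = none) (hm' : m' ∈ rest)
    (ha : mmqRun qmin qmax rank (h :: rest) π h = some a)
    (hb : mmqRun qmin qmax rank (h :: rest) π m' = some b) :
    rank h a ≤ rank h b := by
  rw [mmqRun_cons] at ha hb
  rw [mmqRun_of_notMem (List.nodup_cons.mp hnd).1, mmqStep_self (hnone h List.mem_cons_self)]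
    at ha
  by_contra hlt
  have hbA : b ∉ mmqAllowed qmin qmax π (rest.length + 1) := fun hbA =>
    hlt (List.le_of_mem_argmin (Finset.mem_toList.mpr hbA) ha)
  exact mmqRun_ne_some_of_notMem_mmqAllowed hq (List.nodup_cons.mp hnd).2
    (mmqStep_eq_none_of_mem hnd hnone)
    (notMem_mmqAllowed_mmqStep hq (hnone h List.mem_cons_self) hbA) m' hm' hb

theorem idxOf_lt_idxOf_of_mmqRun (hq : ∀ n, qmin n ≤ qmax n) {m m' : M} {a b : N} :
    ∀ {l : List M} {π : M → Option N}, l.Nodup → (∀ x ∈ l, π x = none) → m ∈ l → m' ∈ l →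
      mmqRun qmin qmax rank l π m = some a → mmqRun qmin qmax rank l π m' = some b →
      rank m b < rank m a → l.idxOf m' < l.idxOf m
  | [], _, _, _, hm, _, _, _, _ => absurd hm List.not_mem_nil
  | h :: rest, π, hnd, hnone, hm, hm', ha, hb, hpref => by
    have hne : m' ≠ m := by
      rintro rfl
      rw [ha, Option.some_inj] at hb
      exact hpref.ne (congrArg (rank m') hb.symm)
    rcases List.mem_cons.mp hm with rfl | hm
    · exact absurd (rank_le_of_mmqRun_cons hq hnd hnone ((List.mem_cons.mp hm').resolve_left hne)
        ha hb) (not_le.mpr hpref)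
    have hmh : m ≠ h := ne_of_mem_of_not_mem hm (List.nodup_cons.mp hnd).1
    rw [List.idxOf_cons_ne rest hmh.symm]
    rcases List.mem_cons.mp hm' with rfl | hm'
    · rw [List.idxOf_cons_self]
      exact Nat.succ_pos _
    rw [List.idxOf_cons_ne rest (ne_of_mem_of_not_mem hm' (List.nodup_cons.mp hnd).1).symm]
    rw [mmqRun_cons] at ha hb
    exact Nat.succ_lt_succ (idxOf_lt_idxOf_of_mmqRun hq (List.nodup_cons.mp hnd).2
      (mmqStep_eq_none_of_mem hnd hnone) hm hm' ha hb hpref)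

end

theorem mmq_ml_fair_general {M N : Type*} [Fintype M] [Fintype N]
    [DecidableEq M] [DecidableEq N]
    (qmin qmax : N → ℕ) (rank : M → N → ℕ)
    (hq : ∀ n, qmin n ≤ qmax n)
    (ml : List M) (hml : ml.Nodup)
    (m m' : M) (a b : N)
    (hm : mmqRun qmin qmax rank ml (fun _ => none) m = some a)
    (hm' : mmqRun qmin qmax rank ml (fun _ => none) m' = some b)
    (hpref : rank m b < rank m a) :
    ml.idxOf m' < ml.idxOf m := by
  have mem_of_assigned : ∀ {x : M} {c : N},
      mmqRun qmin qmax rank ml (fun _ => none) x = some c → x ∈ ml := fun hx => by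
    by_contra hnot
    rw [mmqRun_of_notMem hnot] at hx
    exact Option.some_ne_none _ hx.symm
  exact idxOf_lt_idxOf_of_mmqRun hq hml (fun _ _ => rfl) (mem_of_assigned hm)
    (mem_of_assigned hm') hm hm' hpref

/-- ML-fairness of MMQ: if user `m` strictly prefers the base station assigned to another
user `m'` over its own assignment, then `m'` precedes `m` in the master list `ml`. -/
theorem mmq_ml_fair {M N : Type*} [Fintype M] [Fintype N]
    [DecidableEq M] [DecidableEq N]
    (qmin qmax : N → ℕ) (rank : M → N → ℕ)
    (hrank : ∀ m : M, Function.Injective (rank m))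
    (hq : ∀ n, qmin n ≤ qmax n)
    (hlow : ∑ n : N, qmin n ≤ Fintype.card M)
    (hhigh : Fintype.card M ≤ ∑ n : N, qmax n)
    (ml : List M) (hml : ml.Nodup) (hfull : ∀ m : M, m ∈ ml)
    (m m' : M) (a b : N)
    (hm : mmqRun qmin qmax rank ml (fun _ => none) m = some a)
    (hm' : mmqRun qmin qmax rank ml (fun _ => none) m' = some b)
    (hpref : rank m b < rank m a) :
    ml.idxOf m' < ml.idxOf m :=
  mmq_ml_fair_general qmin qmax rank hq ml hml m m' a b hm hm' hpref
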